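/- arXiv:1910.00885 — 4 statements merged into one kernel-verified Lean document; each statement's English description precedes it below -/
import Mathlib

section
/- Let J ∈ so(N+2,ℝ) have J_{12}=1, J_{21}=-1, other entries zero, and let ad_J(a) = Ja - aJ on g = so(N+2,ℝ). Then ad_J satisfies the polynomial identity ad_J⁵ + 5 ad_J³ + 4 ad_J = 0, i.e., ad_J(ad_J² + 1)(ad_J² + 4) = 0. -/
/-!
Left and right multiplication by `J` are commuting operators `L`, `R` with `L³ = -L`, `R³ = -R`,
because `J³ = -J`. So the eigenvalues of `L` and `R` lie in `{0, ±i}`, those of `ad_J = L - R` in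
`{0, ±i, ±2i}`, which are the roots of `t (t² + 1) (t² + 4)`. Algebraically, this polynomial at
`x - y` lies in the ideal generated by `x³ + x` and `y³ + y` of `ℤ[x, y]`.
-/

open Matrix

theorem sub_pow_five_add_eq_zero_of_pow_three_eq_neg {R : Type*} [CommRing R] {x y : R}
    (hx : x ^ 3 = -x) (hy : y ^ 3 = -y) :
    (x - y) ^ 5 + 5 * (x - y) ^ 3 + 4 * (x - y) = 0 := by
  linear_combination (x ^ 2 - 5 * x * y + 10 * y ^ 2 + 4) * hx +
    (-10 * x ^ 2 + 5 * x * y - y ^ 2 - 4) * hy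

open scoped IsMulCommutative in
theorem Commute.sub_pow_five_add_eq_zero_of_pow_three_eq_neg {A : Type*} [Ring A] {x y : A}
    (hxy : Commute x y) (hx : x ^ 3 = -x) (hy : y ^ 3 = -y) :
    (x - y) ^ 5 + 5 * (x - y) ^ 3 + 4 * (x - y) = 0 := by
  let S := Subring.closure ({x, y} : Set A)
  have : IsMulCommutative S := Subring.isMulCommutative_closure (by
    simp only [Set.mem_insert_iff, Set.mem_singleton_iff]
    rintro a (rfl | rfl) b (rfl | rfl) <;> simp [hxy.eq])
  let x' : S := ⟨x, Subring.subset_closure (by simp)⟩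
  let y' : S := ⟨y, Subring.subset_closure (by simp)⟩
  have h := congrArg Subtype.val <| _root_.sub_pow_five_add_eq_zero_of_pow_three_eq_neg
    (x := x') (y := y') (Subtype.ext (by simpa using hx)) (Subtype.ext (by simpa using hy))
  push_cast at h
  exact h

theorem LinearMap.mulLeft_sub_mulRight_pow_five_add_eq_zero {R A : Type*} [CommSemiring R]
    [Ring A] [Algebra R A] {J : A} (hJ : J ^ 3 = -J) :
    (mulLeft R J - mulRight R J) ^ 5 + (5 : R) • (mulLeft R J - mulRight R J) ^ 3 +
      (4 : R) • (mulLeft R J - mulRight R J) = 0 := by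
  simp only [Algebra.smul_def, map_ofNat]
  refine (LinearMap.commute_mulLeft_right J J).sub_pow_five_add_eq_zero_of_pow_three_eq_neg ?_ ?_
  · ext; simp [LinearMap.pow_mulLeft, hJ]
  · ext; simp [LinearMap.pow_mulRight, hJ]

theorem Matrix.single_sub_single_pow_three {n R : Type*} [DecidableEq n] [Fintype n] [Ring R]
    {i j : n} (hij : i ≠ j) :
    (single i j (1 : R) - single j i 1) ^ 3 = -(single i j 1 - single j i 1) := by
  simp only [pow_succ, pow_zero, one_mul, sub_mul, mul_sub, single_mul_single_same,
    single_mul_single_of_ne, ne_eq, hij, not_false_eq_true, Ne.symm hij, mul_one, zero_mul]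
  abel

/-- ad_J satisfies ad_J⁵ + 5 ad_J³ + 4 ad_J = 0 on so(N+2,ℝ). -/
theorem stmt4 (N : ℕ)
    (J : Matrix (Fin (N + 2)) (Fin (N + 2)) ℝ)
    (hJ : J = fun i j => if i = 0 ∧ j = 1 then 1 else if i = 1 ∧ j = 0 then -1 else 0)
    (adJ : Matrix (Fin (N + 2)) (Fin (N + 2)) ℝ → Matrix (Fin (N + 2)) (Fin (N + 2)) ℝ)
    (hadJ : ∀ a, adJ a = J * a - a * J) :
    ∀ a : Matrix (Fin (N + 2)) (Fin (N + 2)) ℝ, aᵀ = -a →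
      adJ (adJ (adJ (adJ (adJ a)))) + (5 : ℝ) • adJ (adJ (adJ a)) + (4 : ℝ) • adJ a = 0 := by
  intro a _
  have hJ_single : J = single 0 1 1 - single 1 0 1 := by
    subst hJ; ext i j
    simp only [Matrix.sub_apply, single_apply]
    have : (0 : Fin (N + 2)) ≠ 1 := Fin.zero_ne_one
    split_ifs <;> grind
  have hJ_cube : J ^ 3 = -J := hJ_single ▸ single_sub_single_pow_three Fin.zero_ne_one
  have h := LinearMap.mulLeft_sub_mulRight_pow_five_add_eq_zero (R := ℝ) hJ_cube
  simpa [hadJ, pow_succ, Module.End.mul_apply] using LinearMap.congr_fun h a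
end

section
/- Let g = so(N+2,ℝ), J as above, K = Ker(ad_J), and for j ∈ {0,1} set K⁽ʲ⁾ = K ∩ g⁽ʲ⁾ where g⁽ʲ⁾ is the (-1)ʲ-eigenspace of conjugation by Q = diag(-1,1,...,1). Then [K⁽¹⁾, K⁽¹⁾] = 0, [K⁽⁰⁾, K⁽⁰⁾] ⊆ K⁽⁰⁾, and [K⁽⁰⁾, K⁽¹⁾] = 0. -/
open Matrix

lemma Jmul_apply {n : ℕ} (J a : Matrix (Fin (n+2)) (Fin (n+2)) ℝ)
    (hJ : J = fun i j => if i = 0 ∧ j = 1 then 1 else if i = 1 ∧ j = 0 then -1 else 0)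
    (i j : Fin (n+2)) :
    (J * a) i j = if i = 0 then a 1 j else if i = 1 then -a 0 j else 0 := by
  rw [Matrix.mul_apply]
  subst hJ
  by_cases h0 : i = 0
  · simp [h0, Finset.sum_ite_eq']
  · by_cases h1 : i = 1
    · simp [h0, h1, Finset.sum_ite_eq']
    · simp [h0, h1]

lemma mulJ_apply {n : ℕ} (J a : Matrix (Fin (n+2)) (Fin (n+2)) ℝ)
    (hJ : J = fun i j => if i = 0 ∧ j = 1 then 1 else if i = 1 ∧ j = 0 then -1 else 0)
    (i j : Fin (n+2)) :
    (a * J) i j = if j = 1 then a i 0 else if j = 0 then -a i 1 else 0 := by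
  rw [Matrix.mul_apply]
  subst hJ
  by_cases h1 : j = 1
  · simp [h1, Finset.sum_ite_eq]
  · by_cases h0 : j = 0
    · simp [h0, h1, Finset.sum_ite_eq]
    · simp [h0, h1]

lemma keyLem {n : ℕ} (J Q a : Matrix (Fin (n+2)) (Fin (n+2)) ℝ)
    (hJ : J = fun i j => if i = 0 ∧ j = 1 then 1 else if i = 1 ∧ j = 0 then -1 else 0)
    (hQ : Q = Matrix.diagonal (fun i => if i = 0 then -1 else 1))
    (ha : aᵀ = -a) (hcomm : J * a = a * J) (hanti : Q * a * Q = -a) :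
    a = a 0 1 • J := by
  have hskew : ∀ i j, a j i = - a i j := by
    intro i j
    have := congrFun (congrFun ha i) j
    simpa [Matrix.transpose_apply] using this
  have hz : ∀ i j : Fin (n+2), i ≠ 0 → j ≠ 0 → a i j = 0 := by
    intro i j hi hj
    have := congrFun (congrFun hanti i) j
    rw [hQ] at this
    simp [Matrix.diagonal_mul, Matrix.mul_diagonal, hi, hj] at this
    linarith
  have hrow : ∀ j : Fin (n+2), j ≠ 0 → j ≠ 1 → a 0 j = 0 := by
    intro j h0 h1
    have := congrFun (congrFun hcomm 1) j
    rw [Jmul_apply _ _ hJ, mulJ_apply _ _ hJ] at this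
    simp [h0, h1, show (1 : Fin (n+2)) ≠ 0 by simp [Fin.ext_iff]] at this
    linarith
  ext i j
  have hJe := congrFun (congrFun hJ i) j
  simp only [Matrix.smul_apply, smul_eq_mul, hJe]
  by_cases hi0 : i = 0
  · by_cases hj1 : j = 1
    · simp [hi0, hj1, show (0:Fin (n+2)) ≠ 1 by simp [Fin.ext_iff]]
    · by_cases hj0 : j = 0
      · subst hi0 hj0
        have := hskew 0 0
        simp [show (0:Fin (n+2)) ≠ 1 by simp [Fin.ext_iff]]
        linarith
      · simp [hi0, hj0, hj1, hrow j hj0 hj1]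
  · by_cases hj0 : j = 0
    · by_cases hi1 : i = 1
      · subst hi1 hj0
        rw [hskew 0 1]
        simp [show (1:Fin (n+2)) ≠ 0 by simp [Fin.ext_iff]]
      · subst hj0
        rw [hskew 0 i, hrow i hi0 hi1]
        simp [hi0, hi1]
    · rw [hz i j hi0 hj0]
      simp [hi0, hj0]

/-- with K⁽ʲ⁾ = Ker(ad_J) ∩ g⁽ʲ⁾ one has [K⁽¹⁾,K⁽¹⁾] = 0,
[K⁽⁰⁾,K⁽⁰⁾] ⊆ K⁽⁰⁾ and [K⁽⁰⁾,K⁽¹⁾] = 0. -/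
theorem stmt7 (N : ℕ)
    (J : Matrix (Fin (N + 2)) (Fin (N + 2)) ℝ)
    (hJ : J = fun i j => if i = 0 ∧ j = 1 then 1 else if i = 1 ∧ j = 0 then -1 else 0)
    (Q : Matrix (Fin (N + 2)) (Fin (N + 2)) ℝ)
    (hQ : Q = Matrix.diagonal (fun i => if i = 0 then -1 else 1)) :
    (∀ a b : Matrix (Fin (N + 2)) (Fin (N + 2)) ℝ, aᵀ = -a → bᵀ = -b →
      J * a = a * J → J * b = b * J → Q * a * Q = -a → Q * b * Q = -b →
      a * b - b * a = 0) ∧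
    (∀ a b : Matrix (Fin (N + 2)) (Fin (N + 2)) ℝ, aᵀ = -a → bᵀ = -b →
      J * a = a * J → J * b = b * J → Q * a * Q = a → Q * b * Q = b →
      (a * b - b * a)ᵀ = -(a * b - b * a) ∧
      J * (a * b - b * a) = (a * b - b * a) * J ∧
      Q * (a * b - b * a) * Q = a * b - b * a) ∧
    (∀ a b : Matrix (Fin (N + 2)) (Fin (N + 2)) ℝ, aᵀ = -a → bᵀ = -b →
      J * a = a * J → J * b = b * J → Q * a * Q = a → Q * b * Q = -b →
      a * b - b * a = 0) := by
  have hQQ : Q * Q = 1 := by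
    subst hQ
    rw [Matrix.diagonal_mul_diagonal]
    have : (fun i : Fin (N+2) => (if i = 0 then (-1:ℝ) else 1) * (if i = 0 then -1 else 1)) = fun _ => 1 := by
      funext i
      by_cases h : i = 0 <;> simp [h]
    rw [this, Matrix.diagonal_one]
  have conj_mul : ∀ x y : Matrix (Fin (N + 2)) (Fin (N + 2)) ℝ,
      Q * (x * y) * Q = (Q * x * Q) * (Q * y * Q) := by
    intro x y
    have h1 : (Q * x * Q) * (Q * y * Q) = Q * x * ((Q * Q) * (y * Q)) := by
      noncomm_ring
    rw [h1, hQQ, one_mul]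
    noncomm_ring
  refine ⟨?_, ?_, ?_⟩
  · intro a b ha hb hJa hJb hQa hQb
    rw [keyLem J Q a hJ hQ ha hJa hQa, keyLem J Q b hJ hQ hb hJb hQb]
    simp [smul_mul_assoc, mul_smul_comm, smul_smul, mul_comm]
  · intro a b ha hb hJa hJb hQa hQb
    refine ⟨?_, ?_, ?_⟩
    · rw [Matrix.transpose_sub, Matrix.transpose_mul, Matrix.transpose_mul, ha, hb]
      noncomm_ring
    · simp only [Matrix.mul_sub, Matrix.sub_mul, ← Matrix.mul_assoc]
      rw [hJa, hJb, Matrix.mul_assoc a J b, hJb, Matrix.mul_assoc b J a, hJa,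
        ← Matrix.mul_assoc, ← Matrix.mul_assoc]
    · rw [Matrix.mul_sub, Matrix.sub_mul, conj_mul, conj_mul, hQa, hQb]
  · intro a b ha hb hJa hJb hQa hQb
    rw [keyLem J Q b hJ hQ hb hJb hQb, mul_smul_comm, smul_mul_assoc, hJa, sub_self]
end

section
/- Fix μ > 0, c₀ ∈ ℝ with |c₀| < 1 and a constant vector c ∈ ℝᴺ with c₀² + ‖c‖² = 1. Define ξ(x,t) = μx - μ³t and u(x,t) = 2μ c / (cosh ξ + c₀ sinh ξ). Then u is smooth and u solves the vector mKdV equation u_t + u_{xxx} + (3/2)‖u‖² u_x = 0. -/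
noncomputable section

def ux {N : ℕ} (u : ℝ → ℝ → Fin N → ℝ) (x t : ℝ) (j : Fin N) : ℝ :=
  deriv (fun s => u s t j) x

def uxx {N : ℕ} (u : ℝ → ℝ → Fin N → ℝ) (x t : ℝ) (j : Fin N) : ℝ :=
  deriv (fun s => ux u s t j) x

def uxxx {N : ℕ} (u : ℝ → ℝ → Fin N → ℝ) (x t : ℝ) (j : Fin N) : ℝ :=
  deriv (fun s => uxx u s t j) x

def ut {N : ℕ} (u : ℝ → ℝ → Fin N → ℝ) (x t : ℝ) (j : Fin N) : ℝ :=
  deriv (fun s => u x s j) t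

def nsq {N : ℕ} (u : ℝ → ℝ → Fin N → ℝ) (x t : ℝ) : ℝ :=
  ∑ j : Fin N, (u x t j) ^ 2

/-- the one-soliton profile u = 2μc/(cosh ξ + c₀ sinh ξ), ξ = μx − μ³t,
is smooth and solves the vector mKdV equation. -/
theorem stmt15 (N : ℕ) (μ : ℝ) (hμ : 0 < μ) (c₀ : ℝ) (c : Fin N → ℝ)
    (hc : c₀ ^ 2 + ∑ j : Fin N, (c j) ^ 2 = 1) (hc₀ : |c₀| < 1)
    (u : ℝ → ℝ → Fin N → ℝ)
    (hu : ∀ (x t : ℝ) (j : Fin N),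
      u x t j = 2 * μ * c j /
        (Real.cosh (μ * x - μ ^ 3 * t) + c₀ * Real.sinh (μ * x - μ ^ 3 * t))) :
    (∀ j : Fin N, ContDiff ℝ (⊤ : ℕ∞) (fun p : ℝ × ℝ => u p.1 p.2 j)) ∧
    (∀ (x t : ℝ) (j : Fin N),
      ut u x t j + uxxx u x t j + 3 / 2 * nsq u x t * ux u x t j = 0) := by
  obtain ⟨hc₀l, hc₀r⟩ := abs_lt.mp hc₀
  have hc2 : c₀ ^ 2 < 1 := by nlinarith
  have hpos : ∀ ξ : ℝ, 0 < Real.cosh ξ + c₀ * Real.sinh ξ := by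
    intro ξ
    nlinarith [Real.cosh_sq ξ, Real.cosh_pos ξ, sq_nonneg (Real.sinh ξ),
      sq_nonneg (Real.cosh ξ + c₀ * Real.sinh ξ), sq_nonneg (Real.cosh ξ - c₀ * Real.sinh ξ),
      mul_pos (Real.cosh_pos ξ) (Real.cosh_pos ξ)]
  have hne : ∀ ξ : ℝ, Real.cosh ξ + c₀ * Real.sinh ξ ≠ 0 := fun ξ => (hpos ξ).ne'
  -- derivative of the denominator
  have hD : ∀ ξ : ℝ, HasDerivAt (fun s => Real.cosh s + c₀ * Real.sinh s)
      (Real.sinh ξ + c₀ * Real.cosh ξ) ξ :=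
    fun ξ => (Real.hasDerivAt_cosh ξ).add ((Real.hasDerivAt_sinh ξ).const_mul c₀)
  -- g, g1, g2, g3 : the profile 1/D and its first three derivatives
  have hg1 : ∀ ξ : ℝ, HasDerivAt (fun s => (Real.cosh s + c₀ * Real.sinh s)⁻¹)
      (-(Real.sinh ξ + c₀ * Real.cosh ξ) / (Real.cosh ξ + c₀ * Real.sinh ξ) ^ 2) ξ :=
    fun ξ => (hD ξ).inv (hne ξ)
  have hg2 : ∀ ξ : ℝ, HasDerivAt
      (fun s => -(Real.sinh s + c₀ * Real.cosh s) / (Real.cosh s + c₀ * Real.sinh s) ^ 2)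
      ((2 * (Real.sinh ξ + c₀ * Real.cosh ξ) ^ 2 - (Real.cosh ξ + c₀ * Real.sinh ξ) ^ 2) /
        (Real.cosh ξ + c₀ * Real.sinh ξ) ^ 3) ξ := by
    intro ξ
    have hn : HasDerivAt (fun s => -(Real.sinh s + c₀ * Real.cosh s))
        (-(Real.cosh ξ + c₀ * Real.sinh ξ)) ξ :=
      ((Real.hasDerivAt_sinh ξ).add ((Real.hasDerivAt_cosh ξ).const_mul c₀)).neg
    have hd : HasDerivAt (fun s => (Real.cosh s + c₀ * Real.sinh s) ^ 2)
        (2 * (Real.cosh ξ + c₀ * Real.sinh ξ) * (Real.sinh ξ + c₀ * Real.cosh ξ)) ξ := by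
      have h := (hD ξ).pow 2
      refine h.congr_deriv ?_
      all_goals push_cast; ring
    have h := hn.div hd (pow_ne_zero 2 (hne ξ))
    refine h.congr_deriv ?_
    rw [div_eq_div_iff (pow_ne_zero 2 (pow_ne_zero 2 (hne ξ))) (pow_ne_zero 3 (hne ξ))]
    ring
  have hg3 : ∀ ξ : ℝ, HasDerivAt
      (fun s => (2 * (Real.sinh s + c₀ * Real.cosh s) ^ 2 - (Real.cosh s + c₀ * Real.sinh s) ^ 2) /
        (Real.cosh s + c₀ * Real.sinh s) ^ 3)
      ((5 * (Real.cosh ξ + c₀ * Real.sinh ξ) ^ 2 * (Real.sinh ξ + c₀ * Real.cosh ξ)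
        - 6 * (Real.sinh ξ + c₀ * Real.cosh ξ) ^ 3) / (Real.cosh ξ + c₀ * Real.sinh ξ) ^ 4) ξ := by
    intro ξ
    have hD' : HasDerivAt (fun s => Real.sinh s + c₀ * Real.cosh s)
        (Real.cosh ξ + c₀ * Real.sinh ξ) ξ :=
      (Real.hasDerivAt_sinh ξ).add ((Real.hasDerivAt_cosh ξ).const_mul c₀)
    have hn : HasDerivAt
        (fun s => 2 * (Real.sinh s + c₀ * Real.cosh s) ^ 2 - (Real.cosh s + c₀ * Real.sinh s) ^ 2)
        (2 * (2 * (Real.sinh ξ + c₀ * Real.cosh ξ) * (Real.cosh ξ + c₀ * Real.sinh ξ))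
          - 2 * (Real.cosh ξ + c₀ * Real.sinh ξ) * (Real.sinh ξ + c₀ * Real.cosh ξ)) ξ := by
      have h1 : HasDerivAt (fun s => (Real.sinh s + c₀ * Real.cosh s) ^ 2)
          (2 * (Real.sinh ξ + c₀ * Real.cosh ξ) * (Real.cosh ξ + c₀ * Real.sinh ξ)) ξ := by
        have h := hD'.pow 2
        refine h.congr_deriv ?_
        push_cast
        ring
      have h2 : HasDerivAt (fun s => (Real.cosh s + c₀ * Real.sinh s) ^ 2)
          (2 * (Real.cosh ξ + c₀ * Real.sinh ξ) * (Real.sinh ξ + c₀ * Real.cosh ξ)) ξ := by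
        have h := (hD ξ).pow 2
        refine h.congr_deriv ?_
        push_cast
        ring
      exact (h1.const_mul 2).sub h2
    have hd : HasDerivAt (fun s => (Real.cosh s + c₀ * Real.sinh s) ^ 3)
        (3 * (Real.cosh ξ + c₀ * Real.sinh ξ) ^ 2 * (Real.sinh ξ + c₀ * Real.cosh ξ)) ξ := by
      have h := (hD ξ).pow 3
      refine h.congr_deriv ?_
      all_goals push_cast; ring
    have h := hn.div hd (pow_ne_zero 3 (hne ξ))
    refine h.congr_deriv ?_
    rw [div_eq_div_iff (pow_ne_zero 2 (pow_ne_zero 3 (hne ξ))) (pow_ne_zero 4 (hne ξ))]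
    ring
  -- linear phase derivatives
  have hlinx : ∀ (x t : ℝ), HasDerivAt (fun s => μ * s - μ ^ 3 * t) μ x := by
    intro x t
    simpa using (((hasDerivAt_id x).const_mul μ).sub_const (μ ^ 3 * t))
  have hlint : ∀ (x t : ℝ), HasDerivAt (fun s => μ * x - μ ^ 3 * s) (-μ ^ 3) t := by
    intro x t
    simpa using (((hasDerivAt_id t).const_mul (μ ^ 3)).const_sub (μ * x))
  -- formulas for the derivatives of u
  have hux : ∀ (x t : ℝ) (j : Fin N), ux u x t j =
      2 * μ * c j * ((-(Real.sinh (μ * x - μ ^ 3 * t) + c₀ * Real.cosh (μ * x - μ ^ 3 * t)) /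
        (Real.cosh (μ * x - μ ^ 3 * t) + c₀ * Real.sinh (μ * x - μ ^ 3 * t)) ^ 2) * μ) := by
    intro x t j
    have heq : (fun s => u s t j) =
        fun s => 2 * μ * c j * (Real.cosh (μ * s - μ ^ 3 * t) + c₀ * Real.sinh (μ * s - μ ^ 3 * t))⁻¹ :=
      funext fun s => by rw [hu, div_eq_mul_inv]
    unfold ux
    rw [heq]
    exact (((hg1 (μ * x - μ ^ 3 * t)).comp x (hlinx x t)).const_mul (2 * μ * c j)).deriv
  have huxx : ∀ (x t : ℝ) (j : Fin N), uxx u x t j =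
      2 * μ * c j * (((2 * (Real.sinh (μ * x - μ ^ 3 * t) + c₀ * Real.cosh (μ * x - μ ^ 3 * t)) ^ 2
        - (Real.cosh (μ * x - μ ^ 3 * t) + c₀ * Real.sinh (μ * x - μ ^ 3 * t)) ^ 2) /
        (Real.cosh (μ * x - μ ^ 3 * t) + c₀ * Real.sinh (μ * x - μ ^ 3 * t)) ^ 3) * μ * μ) := by
    intro x t j
    have heq : (fun s => ux u s t j) =
        fun s => 2 * μ * c j * ((-(Real.sinh (μ * s - μ ^ 3 * t) + c₀ * Real.cosh (μ * s - μ ^ 3 * t)) /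
          (Real.cosh (μ * s - μ ^ 3 * t) + c₀ * Real.sinh (μ * s - μ ^ 3 * t)) ^ 2) * μ) :=
      funext fun s => hux s t j
    unfold uxx
    rw [heq]
    have h := ((((hg2 (μ * x - μ ^ 3 * t)).comp x (hlinx x t)).mul_const μ).const_mul (2 * μ * c j)).deriv
    exact h
  have huxxx : ∀ (x t : ℝ) (j : Fin N), uxxx u x t j =
      2 * μ * c j * (((5 * (Real.cosh (μ * x - μ ^ 3 * t) + c₀ * Real.sinh (μ * x - μ ^ 3 * t)) ^ 2 *
          (Real.sinh (μ * x - μ ^ 3 * t) + c₀ * Real.cosh (μ * x - μ ^ 3 * t))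
        - 6 * (Real.sinh (μ * x - μ ^ 3 * t) + c₀ * Real.cosh (μ * x - μ ^ 3 * t)) ^ 3) /
        (Real.cosh (μ * x - μ ^ 3 * t) + c₀ * Real.sinh (μ * x - μ ^ 3 * t)) ^ 4) * μ * μ * μ) := by
    intro x t j
    have heq : (fun s => uxx u s t j) =
        fun s => 2 * μ * c j * (((2 * (Real.sinh (μ * s - μ ^ 3 * t) + c₀ * Real.cosh (μ * s - μ ^ 3 * t)) ^ 2
          - (Real.cosh (μ * s - μ ^ 3 * t) + c₀ * Real.sinh (μ * s - μ ^ 3 * t)) ^ 2) /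
          (Real.cosh (μ * s - μ ^ 3 * t) + c₀ * Real.sinh (μ * s - μ ^ 3 * t)) ^ 3) * μ * μ) :=
      funext fun s => huxx s t j
    unfold uxxx
    rw [heq]
    have h := (((((hg3 (μ * x - μ ^ 3 * t)).comp x (hlinx x t)).mul_const μ).mul_const μ).const_mul (2 * μ * c j)).deriv
    exact h
  have hut : ∀ (x t : ℝ) (j : Fin N), ut u x t j =
      2 * μ * c j * ((-(Real.sinh (μ * x - μ ^ 3 * t) + c₀ * Real.cosh (μ * x - μ ^ 3 * t)) /
        (Real.cosh (μ * x - μ ^ 3 * t) + c₀ * Real.sinh (μ * x - μ ^ 3 * t)) ^ 2) * (-μ ^ 3)) := by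
    intro x t j
    have heq : (fun s => u x s j) =
        fun s => 2 * μ * c j * (Real.cosh (μ * x - μ ^ 3 * s) + c₀ * Real.sinh (μ * x - μ ^ 3 * s))⁻¹ :=
      funext fun s => by rw [hu, div_eq_mul_inv]
    unfold ut
    rw [heq]
    exact (((hg1 (μ * x - μ ^ 3 * t)).comp t (hlint x t)).const_mul (2 * μ * c j)).deriv
  constructor
  · intro j
    have heq : (fun p : ℝ × ℝ => u p.1 p.2 j) =
        fun p : ℝ × ℝ => 2 * μ * c j *
          (Real.cosh (μ * p.1 - μ ^ 3 * p.2) + c₀ * Real.sinh (μ * p.1 - μ ^ 3 * p.2))⁻¹ :=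
      funext fun p => by rw [hu, div_eq_mul_inv]
    rw [heq]
    have hl : ContDiff ℝ (⊤ : ℕ∞) (fun p : ℝ × ℝ => μ * p.1 - μ ^ 3 * p.2) :=
      (contDiff_const.mul contDiff_fst).sub (contDiff_const.mul contDiff_snd)
    exact contDiff_const.mul
      (((Real.contDiff_cosh.comp hl).add
        (contDiff_const.mul (Real.contDiff_sinh.comp hl))).inv fun p => hne _)
  · intro x t j
    have hsum : ∑ j : Fin N, (c j) ^ 2 = 1 - c₀ ^ 2 := by linarith
    set ξ := μ * x - μ ^ 3 * t with hξ
    set a := Real.cosh ξ + c₀ * Real.sinh ξ with ha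
    set b := Real.sinh ξ + c₀ * Real.cosh ξ with hb
    have hab : a ^ 2 - b ^ 2 = 1 - c₀ ^ 2 := by
      have h := Real.cosh_sq_sub_sinh_sq ξ
      rw [ha, hb]
      nlinarith [h]
    have hnsq : nsq u x t = 4 * μ ^ 2 * (a ^ 2 - b ^ 2) / a ^ 2 := by
      unfold nsq
      have h : ∀ j : Fin N, u x t j ^ 2 = 4 * μ ^ 2 / a ^ 2 * (c j) ^ 2 := by
        intro j
        rw [hu]
        rw [← hξ, ← ha]
        field_simp
        ring
      rw [Finset.sum_congr rfl fun j _ => h j, ← Finset.mul_sum, hsum, ← hab]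
      ring
    rw [hut x t j, huxxx x t j, hux x t j, hnsq, ← hξ, ← ha, ← hb]
    have hane : a ≠ 0 := hne ξ
    field_simp
    ring
end
end

section
/- Let μ ∈ ℝ, μ ≠ 0, Q = diag(-1,1,...,1), and q ∈ ℂ^{N+2} with qᵀq = 0 and qᵀQq ≠ 0. Set P = Qqqᵀ/(qᵀQq) and suppose P* = QPQ (complex conjugate entrywise). Define M(λ) = 1 + (2iμ/(λ - iμ)) P - (2iμ/(λ + iμ)) QPQ for λ ∈ ℂ \ {iμ, -iμ}. Then M(λ) M(λ)ᵀ = 1 for all such λ, and M(λ) = Q M(-λ) Q⁻¹, and M(λ*)* = M(λ). -/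
/-!
Write `f(λ) = 2iμ/(λ - iμ)`, so that `M(λ) = 1 + f(λ) P + f(-λ) Pᵀ`, using `QPQ = Pᵀ`.
Since `qᵀq = 0`, the rank-one idempotent `P` satisfies `P Pᵀ = Pᵀ P = 0`, and then
`M(λ) M(λ)ᵀ = 1 + (f(λ) + f(-λ) + f(λ) f(-λ)) (P + Pᵀ)`, where the bracket vanishes
because `(1 + f(λ)) (1 + f(-λ)) = 1`. Conjugating by `Q` swaps `P` and `Pᵀ`, which is `λ ↦ -λ`;
the reality condition `P* = Pᵀ` together with `conj (f (conj λ)) = f(-λ)` does the same.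
-/

open Complex

namespace Matrix

section OrthogonalPencil

variable {n R : Type*} [DecidableEq n] [CommRing R]

theorem one_add_smul_add_smul_transpose_mul_transpose [Fintype n] {P : Matrix n n R}
    (hP : P * P = P) (hPPt : P * Pᵀ = 0) (hPtP : Pᵀ * P = 0) {a b : R}
    (hab : (1 + a) * (1 + b) = 1) :
    (1 + a • P + b • Pᵀ) * (1 + a • P + b • Pᵀ)ᵀ = 1 := by
  have hPtPt : Pᵀ * Pᵀ = Pᵀ := by rw [← transpose_mul, hP]
  have hsum : a + b + a * b = 0 := by linear_combination hab
  calc (1 + a • P + b • Pᵀ) * (1 + a • P + b • Pᵀ)ᵀ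
      = 1 + (a + b + a * b) • (P + Pᵀ) := by
        simp only [transpose_add, transpose_smul, transpose_one, transpose_transpose, add_mul,
          mul_add, Matrix.one_mul, Matrix.mul_one, Matrix.smul_mul, Matrix.mul_smul, hP, hPPt,
          hPtP, hPtPt, smul_zero, smul_smul]
        module
    _ = 1 := by rw [hsum, zero_smul, add_zero]

theorem conj_one_add_smul_add_smul_transpose [Fintype n] {Q P : Matrix n n R} (hQ : Q * Q = 1)
    (hPt : Q * P * Q = Pᵀ) (a b : R) :
    Q * (1 + a • P + b • Pᵀ) * Q = 1 + b • P + a • Pᵀ := by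
  have hQPtQ : Q * Pᵀ * Q = P := by
    rw [← hPt, show Q * (Q * P * Q) * Q = (Q * Q) * P * (Q * Q) by noncomm_ring, hQ,
      Matrix.one_mul, Matrix.mul_one]
  simp only [Matrix.mul_add, Matrix.add_mul, Matrix.mul_one, hQ, Matrix.mul_smul,
    Matrix.smul_mul, hPt, hQPtQ]
  abel

theorem map_one_add_smul_add_smul_transpose {S : Type*} [CommRing S] (f : R →+* S)
    (P : Matrix n n R) (a b : R) :
    (1 + a • P + b • Pᵀ).map f = 1 + f a • P.map f + f b • (P.map f)ᵀ := by
  ext i j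
  by_cases h : i = j <;> simp [h]

end OrthogonalPencil

section IsotropicProjector

variable {n K : Type*} [Fintype n] [Field K]

def isotropicProjector (Q : Matrix n n K) (q : n → K) : Matrix n n K :=
  (q ⬝ᵥ Q *ᵥ q)⁻¹ • vecMulVec (Q *ᵥ q) q

variable {Q : Matrix n n K} {q : n → K}

theorem isotropicProjector_mul_self (hd : q ⬝ᵥ Q *ᵥ q ≠ 0) :
    isotropicProjector Q q * isotropicProjector Q q = isotropicProjector Q q := by
  rw [isotropicProjector, Matrix.smul_mul, Matrix.mul_smul, vecMulVec_mul_vecMulVec,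
    vecMulVec_smul, smul_smul, smul_smul, mul_assoc, inv_mul_cancel₀ hd, mul_one]

theorem isotropicProjector_mul_transpose (hq : q ⬝ᵥ q = 0) :
    isotropicProjector Q q * (isotropicProjector Q q)ᵀ = 0 := by
  rw [isotropicProjector, transpose_smul, transpose_vecMulVec, Matrix.smul_mul,
    Matrix.mul_smul, vecMulVec_mul_vecMulVec, hq, zero_smul, vecMulVec_zero, smul_zero,
    smul_zero]

theorem isotropicProjector_transpose_mul [DecidableEq n] (hQ : Q * Q = 1) (hQt : Qᵀ = Q)
    (hq : q ⬝ᵥ q = 0) :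
    (isotropicProjector Q q)ᵀ * isotropicProjector Q q = 0 := by
  have hQq : (Q *ᵥ q) ⬝ᵥ (Q *ᵥ q) = 0 := by
    rw [dotProduct_mulVec, vecMul_mulVec, hQt, hQ, vecMul_one, hq]
  rw [isotropicProjector, transpose_smul, transpose_vecMulVec, Matrix.smul_mul,
    Matrix.mul_smul, vecMulVec_mul_vecMulVec, hQq, zero_smul, vecMulVec_zero, smul_zero,
    smul_zero]

theorem mul_isotropicProjector_mul [DecidableEq n] (hQ : Q * Q = 1) (hQt : Qᵀ = Q) :
    Q * isotropicProjector Q q * Q = (isotropicProjector Q q)ᵀ := by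
  rw [isotropicProjector, transpose_smul, transpose_vecMulVec, Matrix.mul_smul,
    Matrix.smul_mul, mul_vecMulVec, vecMulVec_mul, mulVec_mulVec, hQ, one_mulVec,
    ← mulVec_transpose, hQt]

end IsotropicProjector

end Matrix

section DarbouxPole

noncomputable def darbouxPole (μ : ℝ) (l : ℂ) : ℂ := 2 * μ * I / (l - I * μ)

variable {μ : ℝ}

theorem darbouxPole_neg (l : ℂ) : darbouxPole μ (-l) = -(2 * μ * I / (l + I * μ)) := by
  rw [darbouxPole, ← div_neg, neg_add, sub_eq_add_neg]

theorem one_add_darbouxPole_mul_one_add_darbouxPole_neg {l : ℂ} (hl : l ≠ I * μ)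
    (hl' : l ≠ -(I * μ)) : (1 + darbouxPole μ l) * (1 + darbouxPole μ (-l)) = 1 := by
  have hm : l - I * μ ≠ 0 := sub_ne_zero.mpr hl
  have hp : l + I * μ ≠ 0 := by rwa [← sub_neg_eq_add, sub_ne_zero]
  have hplus : 1 + darbouxPole μ l = (l + I * μ) / (l - I * μ) := by
    rw [darbouxPole, eq_div_iff hm, add_mul, div_mul_cancel₀ _ hm]
    ring
  have hminus : 1 + darbouxPole μ (-l) = (l - I * μ) / (l + I * μ) := by
    rw [darbouxPole_neg, eq_div_iff hp, ← sub_eq_add_neg, sub_mul, div_mul_cancel₀ _ hp]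
    ring
  rw [hplus, hminus, div_mul_div_cancel₀ hm, div_self hp]

theorem conj_darbouxPole_conj (l : ℂ) :
    starRingEnd ℂ (darbouxPole μ (starRingEnd ℂ l)) = darbouxPole μ (-l) := by
  rw [darbouxPole_neg]
  simp only [darbouxPole, map_div₀, map_mul, map_sub, conj_conj, conj_I, conj_ofReal,
    map_ofNat]
  rw [mul_neg, neg_mul, sub_neg_eq_add, neg_div]

end DarbouxPole

open Matrix

theorem stmt17_general (N : ℕ) (μ : ℝ) (q : Fin (N + 2) → ℂ)
    (Q : Matrix (Fin (N + 2)) (Fin (N + 2)) ℂ)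
    (hQ : Q = Matrix.diagonal (fun i => if i = 0 then -1 else 1))
    (hiso : ∑ i, q i * q i = 0)
    (hden : ∑ i, q i * (Q.mulVec q) i ≠ 0)
    (P : Matrix (Fin (N + 2)) (Fin (N + 2)) ℂ)
    (hP : P = (∑ i, q i * (Q.mulVec q) i)⁻¹ • Matrix.vecMulVec (Q.mulVec q) q)
    (hreal : P.map (starRingEnd ℂ) = Q * P * Q)
    (M : ℂ → Matrix (Fin (N + 2)) (Fin (N + 2)) ℂ)
    (hM : ∀ l : ℂ, M l = 1 + (2 * (μ : ℂ) * Complex.I / (l - Complex.I * μ)) • P -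
      (2 * (μ : ℂ) * Complex.I / (l + Complex.I * μ)) • (Q * P * Q)) :
    ∀ l : ℂ, l ≠ Complex.I * μ → l ≠ -(Complex.I * μ) →
      M l * (M l)ᵀ = 1 ∧
      M l = Q * M (-l) * Q⁻¹ ∧
      (M ((starRingEnd ℂ) l)).map (starRingEnd ℂ) = M l := by
  intro l hl hl'
  have hQQ : Q * Q = 1 := by
    rw [hQ, diagonal_mul_diagonal, ← diagonal_one]
    congr 1
    ext i
    split_ifs <;> norm_num
  have hQt : Qᵀ = Q := by rw [hQ, diagonal_transpose]
  replace hP : P = isotropicProjector Q q := hP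
  have hPt : Q * P * Q = Pᵀ := hP ▸ mul_isotropicProjector_mul hQQ hQt
  have hMpole (z : ℂ) : M z = 1 + darbouxPole μ z • P + darbouxPole μ (-z) • Pᵀ := by
    rw [hM, hPt, darbouxPole_neg, neg_smul, ← sub_eq_add_neg, darbouxPole]
  refine ⟨?_, ?_, ?_⟩
  · rw [hMpole]
    subst hP
    exact one_add_smul_add_smul_transpose_mul_transpose (isotropicProjector_mul_self hden)
      (isotropicProjector_mul_transpose hiso) (isotropicProjector_transpose_mul hQQ hQt hiso)
      (one_add_darbouxPole_mul_one_add_darbouxPole_neg hl hl')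
  · rw [inv_eq_right_inv hQQ, hMpole, hMpole, neg_neg,
      conj_one_add_smul_add_smul_transpose hQQ hPt, add_right_comm]
  · rw [hMpole, hMpole, map_one_add_smul_add_smul_transpose, hreal, hPt, transpose_transpose,
      conj_darbouxPole_conj, ← map_neg, conj_darbouxPole_conj, neg_neg,
      add_right_comm]

/-- the Darboux matrix M(λ) = 1 + (2iμ/(λ−iμ))P − (2iμ/(λ+iμ))QPQ
satisfies M(λ)M(λ)ᵀ = 1, M(λ) = QM(−λ)Q⁻¹, and M(λ*)* = M(λ). -/
theorem stmt17 (N : ℕ) (μ : ℝ) (hμ : μ ≠ 0) (q : Fin (N + 2) → ℂ)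
    (Q : Matrix (Fin (N + 2)) (Fin (N + 2)) ℂ)
    (hQ : Q = Matrix.diagonal (fun i => if i = 0 then -1 else 1))
    (hiso : ∑ i, q i * q i = 0)
    (hden : ∑ i, q i * (Q.mulVec q) i ≠ 0)
    (P : Matrix (Fin (N + 2)) (Fin (N + 2)) ℂ)
    (hP : P = (∑ i, q i * (Q.mulVec q) i)⁻¹ • Matrix.vecMulVec (Q.mulVec q) q)
    (hreal : P.map (starRingEnd ℂ) = Q * P * Q)
    (M : ℂ → Matrix (Fin (N + 2)) (Fin (N + 2)) ℂ)
    (hM : ∀ l : ℂ, M l = 1 + (2 * (μ : ℂ) * Complex.I / (l - Complex.I * μ)) • P -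
      (2 * (μ : ℂ) * Complex.I / (l + Complex.I * μ)) • (Q * P * Q)) :
    ∀ l : ℂ, l ≠ Complex.I * μ → l ≠ -(Complex.I * μ) →
      M l * (M l)ᵀ = 1 ∧
      M l = Q * M (-l) * Q⁻¹ ∧
      (M ((starRingEnd ℂ) l)).map (starRingEnd ℂ) = M l :=
  stmt17_general N μ q Q hQ hiso hden P hP hreal M hM
end
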